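/- arXiv:1412.2475 — 3 statements merged into one kernel-verified Lean document; each statement's English description precedes it below -/
import Mathlib

section
/- Let M be an irreducible nonnegative square matrix with index of imprimitivity h. If M is cogredient (conjugate by a permutation matrix) to a matrix in superdiagonal (m₁,…,m_k)-block form in which all k blocks A_{1,2},…,A_{k−1,k},A_{k,1} are nonzero, then k divides h. -/
open Polynomial

def Matrix.IsReducible {n : ℕ} (M : Matrix (Fin n) (Fin n) ℝ) : Prop :=
  ∃ (p : ℕ), 0 < p ∧ p < n ∧ ∃ σ : Equiv.Perm (Fin n),
    ∀ i j : Fin n, p ≤ (i : ℕ) → (j : ℕ) < p → M (σ i) (σ j) = 0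

def Matrix.IsIrreducible' {n : ℕ} (M : Matrix (Fin n) (Fin n) ℝ) : Prop :=
  ¬ M.IsReducible

noncomputable def Matrix.eigs {n : ℕ} (M : Matrix (Fin n) (Fin n) ℝ) : Multiset ℂ :=
  (M.map (Complex.ofReal)).charpoly.roots

/-!
With `ω` a primitive `k`-th root of unity, conjugating the cyclic block matrix by
`diag (ω ^ b i)` multiplies it by `ω⁻¹`, so its spectrum is invariant under rotation by `ω`.
Rotation by `ω` acts freely on `ℂ \ {0}` with orbits of size `k`, and the eigenvalues of modulus
`δ₀ > 0` form a union of such orbits.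
-/

open Finset

/-- The fibres of `z ↦ z ^ k` on `S` are full orbits `{ω ^ j * z | j < k}`, each of size `k`. -/
theorem IsPrimitiveRoot.dvd_card_of_mul_mem {K : Type*} [CommRing K] [IsDomain K] [DecidableEq K]
    {k : ℕ} {ω : K} (hω : IsPrimitiveRoot ω k) (hk : 0 < k) {S : Finset K} (h0 : 0 ∉ S)
    (hS : ∀ z ∈ S, ω * z ∈ S) : k ∣ #S := by
  have hpow : ∀ j : ℕ, ∀ z ∈ S, ω ^ j * z ∈ S := by
    intro j
    induction j with
    | zero => simp
    | succ j ih => exact fun z hz => by simpa [pow_succ', mul_assoc] using hS _ (ih z hz)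
  rw [card_eq_sum_card_image (· ^ k) S]
  refine dvd_sum fun y hy => ?_
  obtain ⟨z, hz, rfl⟩ := mem_image.1 hy
  have hz0 : z ≠ 0 := fun h => h0 (h ▸ hz)
  have hfibre : {w ∈ S | w ^ k = z ^ k} = (nthRoots k (z ^ k)).toFinset := by
    ext w
    simp only [mem_filter, Multiset.mem_toFinset, mem_nthRoots hk, and_iff_right_iff_imp]
    intro hw
    rw [← mem_nthRoots hk, hω.nthRoots_eq rfl] at hw
    obtain ⟨j, -, rfl⟩ := Multiset.mem_map.1 hw
    exact hpow j z hz
  rw [hfibre, Multiset.toFinset_card_of_nodup (hω.nthRoots_nodup (pow_ne_zero k hz0)),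
    hω.nthRoots_eq rfl, Multiset.card_map, Multiset.card_range]

namespace Matrix

variable {ι K : Type*} [Fintype ι] [DecidableEq ι] [Field K] {k : ℕ} {ω : K}
  {A : Matrix ι ι K} {c : ι → Fin k}

theorem diagonal_pow_mul_smul_of_cyclic_support (hω : ω ^ k = 1)
    (hA : ∀ i j, A i j ≠ 0 → (c j : ℕ) = (c i + 1) % k) :
    diagonal (fun i => ω ^ (c i : ℕ)) * (ω • A) =
      A * diagonal (fun i => ω ^ (c i : ℕ)) := by
  ext i j
  rw [diagonal_mul, mul_diagonal, smul_apply, smul_eq_mul]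
  by_cases hij : A i j = 0
  · simp [hij]
  · rw [hA i j hij, ← pow_eq_pow_mod _ hω, pow_succ]
    ring

theorem isRoot_charpoly_mul_of_cyclic_support (hω : ω ^ k = 1) (hω0 : ω ≠ 0)
    (hA : ∀ i j, A i j ≠ 0 → (c j : ℕ) = (c i + 1) % k) {z : K} (hz : A.charpoly.IsRoot z) :
    A.charpoly.IsRoot (ω * z) := by
  obtain ⟨u, hu⟩ :=
    isUnit_diagonal.2 (Pi.isUnit_iff.2 fun i => (pow_ne_zero (c i : ℕ) hω0).isUnit)
  have hconj : (u : Matrix ι ι K) * (ω • A) * (↑u⁻¹ : Matrix ι ι K) = A := by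
    rw [hu, diagonal_pow_mul_smul_of_cyclic_support hω hA, ← hu, Units.mul_inv_cancel_right]
  rw [← mem_spectrum_iff_isRoot_charpoly] at hz ⊢
  rw [← hconj, spectrum.units_conjugate]
  exact spectrum.smul_mem_smul_iff (r := Units.mk0 ω hω0).2 hz

end Matrix

theorem superdiagonal_block_form_divides_imprimitivity_general
    {n k : ℕ} (hk : 0 < k) (M : Matrix (Fin n) (Fin n) ℝ)
    (δ₀ : ℝ) (hδpos : 0 < δ₀)
    (h : ℕ) (hh : h = (M.eigs.toFinset.filter (fun δ => ‖δ‖ = δ₀)).card)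
    (σ : Equiv.Perm (Fin n)) (b : Fin n → Fin k)
    (hblock : ∀ i j : Fin n, M (σ i) (σ j) ≠ 0 → ((b j : ℕ)) = ((b i : ℕ) + 1) % k) :
    k ∣ h := by
  obtain ⟨ω, hω⟩ : ∃ ω : ℂ, IsPrimitiveRoot ω k :=
    ⟨_, Complex.isPrimitiveRoot_exp k hk.ne'⟩
  have hsupport : ∀ i j, M.map Complex.ofReal i j ≠ 0 →
      (b (σ.symm j) : ℕ) = (b (σ.symm i) + 1) % k := fun i j hij =>
    hblock _ _ (by simpa using hij)
  have hrot : ∀ z ∈ M.eigs, ω * z ∈ M.eigs := by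
    intro z hz
    rw [Matrix.eigs, mem_roots (Matrix.charpoly_monic _).ne_zero] at hz ⊢
    exact Matrix.isRoot_charpoly_mul_of_cyclic_support hω.pow_eq_one (hω.ne_zero hk.ne')
      hsupport hz
  subst hh
  refine hω.dvd_card_of_mul_mem hk (by simp [hδpos.ne]) fun z hz => ?_
  rw [mem_filter, Multiset.mem_toFinset] at hz ⊢
  exact ⟨hrot z hz.1, by rw [norm_mul, hω.norm'_eq_one hk.ne', one_mul, hz.2]⟩

/-- If an irreducible nonnegative matrix `M`, with index of imprimitivity `h` (the number
of eigenvalues of maximal modulus `δ₀`), is cogredient (via the permutation `σ`) to a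
matrix in superdiagonal `(m 0, …, m (k-1))`-block form (blocks described by the monotone
block-assignment function `b` with fibers of cardinalities `m`), in which all `k`
superdiagonal blocks are nonzero, then `k` divides `h`. -/
theorem superdiagonal_block_form_divides_imprimitivity
    {n k : ℕ} (hk : 0 < k) (M : Matrix (Fin n) (Fin n) ℝ)
    (hM : ∀ i j, 0 ≤ M i j) (hirr : M.IsIrreducible')
    (δ₀ : ℝ) (hδpos : 0 < δ₀) (hδeig : (δ₀ : ℂ) ∈ M.eigs)
    (hδmax : ∀ δ ∈ M.eigs, ‖δ‖ ≤ δ₀)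
    (h : ℕ) (hh : h = (M.eigs.toFinset.filter (fun δ => ‖δ‖ = δ₀)).card)
    (m : Fin k → ℕ) (σ : Equiv.Perm (Fin n)) (b : Fin n → Fin k)
    (hmono : Monotone fun i => (b i : ℕ))
    (hcard : ∀ a : Fin k, (Finset.univ.filter fun i => b i = a).card = m a)
    (hblock : ∀ i j : Fin n, M (σ i) (σ j) ≠ 0 → ((b j : ℕ)) = ((b i : ℕ) + 1) % k)
    (hnonzero : ∀ a : Fin k, ∃ i j : Fin n, b i = a ∧ M (σ i) (σ j) ≠ 0) :
    k ∣ h :=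
  superdiagonal_block_form_divides_imprimitivity_general hk M δ₀ hδpos h hh σ b hblock
end

section
/- Let M be an irreducible nonnegative square matrix. Then the index of imprimitivity h(M) of M equals the greatest common divisor of the lengths of all directed cycles in the associated directed graph D(M). -/
open Polynomial

/-- There is a cycle of length `k` through the vertex `v` in the directed graph `D(M)`
associated to `M` (an arc goes from `j` to `i` whenever `M i j ≠ 0`). -/
def Matrix.HasCycle {n : ℕ} (M : Matrix (Fin n) (Fin n) ℝ) (v : Fin n) (k : ℕ) : Prop :=
  ∃ f : ℕ → Fin n, f 0 = v ∧ f k = v ∧ ∀ t < k, M (f (t + 1)) (f t) ≠ 0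

/-- `d` is the greatest common divisor of the set `S` of natural numbers. -/
def IsGCDOf (S : Set ℕ) (d : ℕ) : Prop :=
  (∀ k ∈ S, d ∣ k) ∧ ∀ e : ℕ, (∀ k ∈ S, e ∣ k) → e ∣ d

/-!
Every eigenvalue has modulus at most `δ₀`, so `tr (M ^ m) ≤ n δ₀ ^ m`, and irreducibility turns this
into a bound `C δ₀ ^ m` on all entries of `M ^ m`. Hence a nonnegative `y` with `M y ≥ δ₀ y` is a
positive eigenvector: otherwise `z = P y`, for a positive matrix `P` commuting with `M`, satisfies
`M z ≥ (δ₀ + ε) z`, and `M ^ m z` would grow like `(δ₀ + ε) ^ m`.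

For an eigenvector `y` of an eigenvalue `λ` with `|λ| = δ₀` this applies to `(|y i|)ᵢ`, and
equality in the triangle inequality then shows that the phases `φ = y / |y|` satisfy
`φ j = (λ / δ₀) φ i` along every arc `j → i` of `D(M)`. Conversely such a phase function times the
Perron vector is an eigenvector for `δ₀ ζ`. Following a cycle shows that the ratios `ζ` admitting
a phase function are exactly the `ζ` with `ζ ^ k = 1` for every cycle length `k`. These form a
finite, hence cyclic, group of roots of unity, whose order is the gcd of the cycle lengths.
-/

theorem Complex.eq_mul_norm_of_sum_eq_mul_sum_norm {ι : Type*} {s : Finset ι} {z : ι → ℂ}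
    {u : ℂ} (hu : ‖u‖ = 1) (h : ∑ j ∈ s, z j = u * ∑ j ∈ s, (‖z j‖ : ℂ)) :
    ∀ j ∈ s, z j = u * ‖z j‖ := by
  have hconj : starRingEnd ℂ u * u = 1 := by
    rw [mul_comm, Complex.mul_conj, Complex.normSq_eq_norm_sq, hu]; norm_num
  have hre_le : ∀ j, (starRingEnd ℂ u * z j).re ≤ ‖z j‖ := fun j => by
    simpa [hu] using Complex.re_le_norm (starRingEnd ℂ u * z j)
  have hsum : ∑ j ∈ s, (‖z j‖ - (starRingEnd ℂ u * z j).re) = 0 := by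
    rw [Finset.sum_sub_distrib, ← Complex.re_sum, ← Finset.mul_sum, h, ← mul_assoc, hconj,
      one_mul, ← Complex.ofReal_sum, Complex.ofReal_re, sub_self]
  intro j hj
  have hj_eq := (Finset.sum_eq_zero_iff_of_nonneg fun j _ => sub_nonneg.2 (hre_le j)).1 hsum j hj
  have hreal : starRingEnd ℂ u * z j = ‖z j‖ := by
    have hnorm : ‖starRingEnd ℂ u * z j‖ = ‖z j‖ := by simp [hu]
    rw [← hnorm]
    exact Complex.eq_coe_norm_of_nonneg (Complex.re_eq_norm.1 (by rw [hnorm]; linarith))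
  calc z j = u * (starRingEnd ℂ u * z j) := by rw [← mul_assoc, mul_comm u, hconj, one_mul]
    _ = u * ‖z j‖ := by rw [hreal]

theorem isGCDOf_card_of_mem_iff_forall_pow_eq_one {S : Set ℕ} {T : Finset ℂ}
    (hT : ∀ ζ, ζ ∈ T ↔ ∀ k ∈ S, ζ ^ k = 1) : IsGCDOf S T.card := by
  obtain ⟨k₀, hk₀, hk₀0⟩ : ∃ k ∈ S, k ≠ 0 := by
    by_contra! hS
    obtain ⟨ζ, hζ⟩ := Infinite.exists_notMem_finset T
    exact hζ ((hT ζ).2 fun k hk => by rw [hS k hk, pow_zero])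
  let H : Subgroup ℂˣ := ⨅ k ∈ S, rootsOfUnity k ℂ
  have hmem : ∀ u : ℂˣ, u ∈ H ↔ (u : ℂ) ∈ T := by
    simp [H, Subgroup.mem_iInf, hT, Units.ext_iff]
  have hcard : Nat.card H = T.card := by
    rw [← SetLike.coe_sort_coe, Nat.card_coe_set_eq,
      ← Set.ncard_image_of_injective _ Units.val_injective, ← Set.ncard_coe_finset]
    congr 1
    ext ζ
    refine ⟨?_, fun hζ => ?_⟩
    · rintro ⟨u, hu, rfl⟩; exact (hmem u).1 hu
    · have hζ0 : ζ ≠ 0 := by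
        rintro rfl
        exact hk₀0 (by simpa [zero_pow_eq] using ((hT 0).1 hζ k₀ hk₀))
      exact ⟨Units.mk0 ζ hζ0, (hmem _).2 hζ, rfl⟩
  have : Finite H :=
    Nat.finite_of_card_ne_zero (by rw [hcard]; exact Finset.card_ne_zero.2 ⟨1, by simp [hT]⟩)
  refine ⟨fun k hk => ?_, fun e he => ?_⟩
  · rw [← hcard, ← IsCyclic.exponent_eq_card, Monoid.exponent_dvd_iff_forall_pow_eq_one]
    intro u
    ext
    simpa using (hT _).1 ((hmem u).1 u.2) k hk
  · have he0 : e ≠ 0 := by rintro rfl; exact hk₀0 (Nat.eq_zero_of_zero_dvd (he k₀ hk₀))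
    have hprim := Complex.isPrimitiveRoot_exp e he0
    let ζ : ℂˣ := (hprim.isUnit he0).unit
    have hζ : IsPrimitiveRoot ζ e := IsPrimitiveRoot.coe_units_iff.1 hprim
    have hζH : ζ ∈ H := (hmem ζ).2 ((hT _).2 fun k hk => by
      rw [← Units.val_pow_eq_pow_val, (hζ.pow_eq_one_iff_dvd k).2 (he k hk), Units.val_one])
    rw [← hcard, hζ.eq_orderOf]
    exact Subgroup.orderOf_dvd_natCard H hζH

namespace Matrix

section Walk

variable {ι R : Type*} [Zero R]

def HasWalk (M : Matrix ι ι R) (i j : ι) (k : ℕ) : Prop :=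
  ∃ f : ℕ → ι, f 0 = i ∧ f k = j ∧ ∀ t < k, M (f (t + 1)) (f t) ≠ 0

theorem hasWalk_zero_iff {M : Matrix ι ι R} {i j : ι} :
    HasWalk M i j 0 ↔ i = j :=
  ⟨fun ⟨f, h0, hk, _⟩ => h0.symm.trans hk, fun h => ⟨fun _ => j, h.symm, rfl, by simp⟩⟩

theorem hasWalk_succ_iff {M : Matrix ι ι R} {i j : ι} {k : ℕ} :
    HasWalk M i j (k + 1) ↔ ∃ c, HasWalk M i c k ∧ M j c ≠ 0 := by
  constructor
  · rintro ⟨f, h0, hk, hf⟩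
    exact ⟨f k, ⟨f, h0, rfl, fun t ht => hf t (by omega)⟩, hk ▸ hf k k.lt_succ_self⟩
  · rintro ⟨c, ⟨f, h0, hk, hf⟩, hjc⟩
    refine ⟨fun t => if t ≤ k then f t else j, by simpa using h0, by simp, fun t ht => ?_⟩
    rcases (Nat.lt_succ_iff.1 ht).lt_or_eq with ht | rfl
    · simpa [ht.le, Nat.succ_le_of_lt ht] using hf t ht
    · simpa [hk] using hjc

end Walk

variable {ι : Type*} [Fintype ι] {M : Matrix ι ι ℝ}

theorem mulVec_le_mulVec (hM : ∀ i j, 0 ≤ M i j) {v w : ι → ℝ} (h : v ≤ w) :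
    M *ᵥ v ≤ M *ᵥ w := fun i =>
  Finset.sum_le_sum fun j _ => mul_le_mul_of_nonneg_left (h j) (hM i j)

theorem mulVec_apply_pos {P : Matrix ι ι ℝ} (hP : ∀ i j, 0 < P i j) {v : ι → ℝ} (hv : 0 ≤ v)
    (hv0 : v ≠ 0) (i : ι) : 0 < (P *ᵥ v) i := by
  obtain ⟨j, hj⟩ := Function.ne_iff.1 hv0
  exact Finset.sum_pos' (fun j _ => mul_nonneg (hP i j).le (hv j))
    ⟨j, Finset.mem_univ j, mul_pos (hP i j) ((hv j).lt_of_ne' hj)⟩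

theorem norm_smul_le_mulVec_norm (hM : ∀ i j, 0 ≤ M i j) {μ : ℂ} {y : ι → ℂ}
    (h : M.map Complex.ofReal *ᵥ y = μ • y) :
    ‖μ‖ • (fun i => ‖y i‖) ≤ M *ᵥ fun i => ‖y i‖ := fun i => by
  calc ‖μ‖ * ‖y i‖ = ‖∑ j, (M i j : ℂ) * y j‖ := by
        rw [← norm_mul, ← smul_eq_mul, ← Pi.smul_apply, ← h]; rfl
    _ ≤ ∑ j, ‖(M i j : ℂ) * y j‖ := norm_sum_le _ _
    _ = (M *ᵥ fun i => ‖y i‖) i := by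
        simp [mulVec, dotProduct, abs_of_nonneg (hM i _)]

variable [DecidableEq ι]

theorem hasWalk_iff_pow_apply_pos (hM : ∀ i j, 0 ≤ M i j) {i j : ι} {k : ℕ} :
    HasWalk M i j k ↔ 0 < (M ^ k) j i := by
  induction k generalizing j with
  | zero => by_cases h : i = j <;> simp [hasWalk_zero_iff, h, Ne.symm]
  | succ k ih =>
    rw [hasWalk_succ_iff, pow_succ', mul_apply,
      Finset.sum_pos_iff_of_nonneg fun c _ => mul_nonneg (hM j c) (pow_apply_nonneg hM k c i)]
    simp only [Finset.mem_univ, true_and, ih]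
    refine exists_congr fun c => ⟨fun ⟨hc, hjc⟩ => mul_pos ((hM j c).lt_of_ne' hjc) hc,
      fun h => ⟨pos_of_mul_pos_right h (hM j c),
        (pos_of_mul_pos_left h (pow_apply_nonneg hM k c i)).ne'⟩⟩

theorem mem_roots_charpoly_iff {K : Type*} [Field K] (A : Matrix ι ι K) (μ : K) :
    μ ∈ A.charpoly.roots ↔ ∃ v ≠ 0, A *ᵥ v = μ • v := by
  rw [mem_roots A.charpoly_monic.ne_zero, IsRoot.def, eval_charpoly,
    ← exists_mulVec_eq_zero_iff]
  simp only [sub_mulVec, scalar_apply, sub_eq_zero, eq_comm, ← smul_one_eq_diagonal, smul_mulVec,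
    one_mulVec]

theorem exists_mem_roots_charpoly_pow_eq (A : Matrix ι ι ℂ) {m : ℕ} (hm : 0 < m) {μ : ℂ}
    (hμ : μ ∈ (A ^ m).charpoly.roots) : ∃ r ∈ A.charpoly.roots, r ^ m = μ := by
  simp only [mem_roots (charpoly_monic _).ne_zero, ← mem_spectrum_iff_isRoot_charpoly] at hμ ⊢
  rwa [spectrum.map_pow_of_pos A hm] at hμ

theorem norm_trace_pow_le (A : Matrix ι ι ℂ) {r : ℝ} (hr : ∀ μ ∈ A.charpoly.roots, ‖μ‖ ≤ r)
    (m : ℕ) : ‖trace (A ^ m)‖ ≤ Fintype.card ι * r ^ m := by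
  rcases m.eq_zero_or_pos with rfl | hm
  · simp
  have hcard : (A ^ m).charpoly.roots.card = Fintype.card ι := by
    rw [splits_iff_card_roots.1 (IsAlgClosed.splits _), charpoly_natDegree_eq_dim]
  rw [trace_eq_sum_roots_charpoly, ← hcard, ← nsmul_eq_mul]
  refine (norm_multiset_sum_le _).trans ?_
  rw [← Multiset.card_map (‖·‖)]
  refine Multiset.sum_le_card_nsmul _ _ ?_
  rw [Multiset.forall_mem_map_iff]
  intro μ hμ
  obtain ⟨r', hr', rfl⟩ := exists_mem_roots_charpoly_pow_eq A hm hμ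
  rw [norm_pow]
  exact pow_le_pow_left₀ (norm_nonneg _) (hr r' hr') m

theorem trace_pow_le (M : Matrix ι ι ℝ) {r : ℝ}
    (hr : ∀ μ ∈ (M.map Complex.ofReal).charpoly.roots, ‖μ‖ ≤ r) (m : ℕ) :
    trace (M ^ m) ≤ Fintype.card ι * r ^ m := by
  have h := norm_trace_pow_le (M.map Complex.ofReal) hr m
  have hmap : (M.map Complex.ofReal) ^ m = (M ^ m).map Complex.ofReal :=
    (map_pow Complex.ofRealHom.mapMatrix M m).symm
  have htrace : trace ((M ^ m).map Complex.ofReal) = ((trace (M ^ m) : ℝ) : ℂ) := by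
    simp [trace]
  rw [hmap, htrace, Complex.norm_real, Real.norm_eq_abs] at h
  exact (le_abs_self _).trans h

theorem pow_add_apply_pos (hM : ∀ i j, 0 ≤ M i j) {a b : ℕ} {i c j : ι}
    (h₁ : 0 < (M ^ a) i c) (h₂ : 0 < (M ^ b) c j) : 0 < (M ^ (a + b)) i j := by
  rw [pow_add, mul_apply]
  exact Finset.sum_pos'
    (fun l _ => mul_nonneg (pow_apply_nonneg hM a i l) (pow_apply_nonneg hM b l j))
    ⟨c, Finset.mem_univ c, mul_pos h₁ h₂⟩

theorem exists_pos_commute (hM : ∀ i j, 0 ≤ M i j) (hreach : ∀ i j, ∃ k, 0 < (M ^ k) i j) :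
    ∃ P : Matrix ι ι ℝ, (∀ i j, 0 < P i j) ∧ Commute M P := by
  choose k hk using hreach
  refine ⟨∑ p : ι × ι, M ^ k p.1 p.2, fun i j => ?_,
    Commute.sum_right _ _ _ fun p _ => Commute.self_pow M _⟩
  rw [sum_apply]
  exact (hk i j).trans_le (Finset.single_le_sum (f := fun p : ι × ι => (M ^ k p.1 p.2) i j)
    (fun p _ => pow_apply_nonneg hM _ _ _) (Finset.mem_univ (i, j)))

theorem exists_pow_apply_le_of_trace_pow_le (hM : ∀ i j, 0 ≤ M i j)
    (hreach : ∀ i j, ∃ k, 0 < (M ^ k) i j) {c r : ℝ} (hr : 0 ≤ r)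
    (htr : ∀ m, trace (M ^ m) ≤ c * r ^ m) :
    ∃ C, ∀ m i j, (M ^ m) i j ≤ C * r ^ m := by
  choose k hk using hreach
  -- `(M ^ m) i j * (M ^ k) j i ≤ (M ^ (m + k)) i i`, and the diagonal is bounded by the trace
  have hdiag : ∀ m i, (M ^ m) i i ≤ c * r ^ m := fun m i =>
    (Finset.single_le_sum (f := fun l => (M ^ m) l l) (fun l _ => pow_apply_nonneg hM m l l)
      (Finset.mem_univ i)).trans (htr m)
  refine ⟨∑ p : ι × ι, c * r ^ k p.2 p.1 / (M ^ k p.2 p.1) p.2 p.1, fun m i j => ?_⟩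
  have hle : (M ^ m) i j ≤ c * r ^ k j i / (M ^ k j i) j i * r ^ m := by
    rw [div_mul_eq_mul_div, le_div_iff₀ (hk j i), mul_assoc, ← pow_add, add_comm]
    calc (M ^ m) i j * (M ^ k j i) j i ≤ (M ^ (m + k j i)) i i := by
          rw [pow_add, mul_apply]
          exact Finset.single_le_sum (f := fun l => (M ^ m) i l * (M ^ k j i) l i)
            (fun l _ => mul_nonneg (pow_apply_nonneg hM _ _ _) (pow_apply_nonneg hM _ _ _))
            (Finset.mem_univ j)
      _ ≤ c * r ^ (m + k j i) := hdiag _ _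
  refine hle.trans (mul_le_mul_of_nonneg_right ?_ (pow_nonneg hr m))
  exact Finset.single_le_sum (f := fun p : ι × ι => c * r ^ k p.2 p.1 / (M ^ k p.2 p.1) p.2 p.1)
    (fun p _ => div_nonneg ((pow_apply_nonneg hM _ p.1 p.1).trans (hdiag _ p.1)) (hk _ _).le)
    (Finset.mem_univ (i, j))

theorem le_of_smul_le_mulVec (hM : ∀ i j, 0 ≤ M i j) {C δ : ℝ} (hδ : 0 < δ)
    (hbound : ∀ m i j, (M ^ m) i j ≤ C * δ ^ m) {r : ℝ} (hr : 0 ≤ r) {z : ι → ℝ} (hz : 0 ≤ z)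
    {i : ι} (hzi : 0 < z i) (h : r • z ≤ M *ᵥ z) : r ≤ δ := by
  have hgrow : ∀ m : ℕ, r ^ m • z ≤ (M ^ m) *ᵥ z := by
    intro m
    induction m with
    | zero => simp
    | succ m ih =>
      calc r ^ (m + 1) • z = r ^ m • (r • z) := by rw [pow_succ, mul_smul]
        _ ≤ r ^ m • (M *ᵥ z) := smul_le_smul_of_nonneg_left h (pow_nonneg hr m)
        _ = M *ᵥ (r ^ m • z) := (mulVec_smul M _ z).symm
        _ ≤ M *ᵥ ((M ^ m) *ᵥ z) := mulVec_le_mulVec hM ih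
        _ = (M ^ (m + 1)) *ᵥ z := by rw [mulVec_mulVec, pow_succ']
  have hratio : ∀ m : ℕ, (r / δ) ^ m ≤ C * (∑ j, z j) / z i := fun m => by
    rw [div_pow, div_le_div_iff₀ (pow_pos hδ m) hzi]
    calc r ^ m * z i ≤ ((M ^ m) *ᵥ z) i := by simpa using hgrow m i
      _ ≤ ∑ j, C * δ ^ m * z j :=
        Finset.sum_le_sum fun j _ => mul_le_mul_of_nonneg_right (hbound m i j) (hz j)
      _ = C * (∑ j, z j) * δ ^ m := by rw [← Finset.mul_sum]; ring
  by_contra! hδr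
  obtain ⟨m, hm⟩ := pow_unbounded_of_one_lt (C * (∑ j, z j) / z i) ((one_lt_div hδ).2 hδr)
  exact (hratio m).not_gt hm

theorem mulVec_eq_smul_of_smul_le_mulVec (hM : ∀ i j, 0 ≤ M i j)
    (hreach : ∀ i j, ∃ k, 0 < (M ^ k) i j) {C δ : ℝ} (hδ : 0 < δ)
    (hbound : ∀ m i j, (M ^ m) i j ≤ C * δ ^ m) {y : ι → ℝ} (hy : 0 ≤ y)
    (h : δ • y ≤ M *ᵥ y) : M *ᵥ y = δ • y := by
  by_contra hne
  obtain ⟨P, hP, hMP⟩ := exists_pos_commute hM hreach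
  set w := M *ᵥ y - δ • y with hw_def
  have hw0 : w ≠ 0 := sub_ne_zero.2 hne
  have hy0 : y ≠ 0 := by rintro rfl; simp at hne
  obtain ⟨i, -⟩ := Function.ne_iff.1 hy0
  set z := P *ᵥ y
  have hz : ∀ j, 0 < z j := mulVec_apply_pos hP hy hy0
  have hPw : ∀ j, 0 < (P *ᵥ w) j := mulVec_apply_pos hP (sub_nonneg.2 h) hw0
  have hMz : M *ᵥ z = δ • z + P *ᵥ w := by
    rw [mulVec_mulVec, hMP.eq, ← mulVec_mulVec, hw_def, mulVec_sub, mulVec_smul]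
    abel
  set ε := Finset.univ.inf' ⟨i, Finset.mem_univ i⟩ fun j => (P *ᵥ w) j / z j
  have hε : 0 < ε := (Finset.lt_inf'_iff _).2 fun j _ => div_pos (hPw j) (hz j)
  have hεz : (δ + ε) • z ≤ M *ᵥ z := fun j => by
    have hεj : ε * z j ≤ (P *ᵥ w) j :=
      (le_div_iff₀ (hz j)).1 (Finset.inf'_le (fun j => (P *ᵥ w) j / z j) (Finset.mem_univ j))
    simp only [hMz, Pi.add_apply, Pi.smul_apply, smul_eq_mul]
    linarith
  linarith [le_of_smul_le_mulVec hM hδ hbound (by positivity) (fun j => (hz j).le) (hz i) hεz]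

theorem pow_mulVec_eq_smul {δ : ℝ} {y : ι → ℝ} (h : M *ᵥ y = δ • y) (k : ℕ) :
    (M ^ k) *ᵥ y = δ ^ k • y := by
  induction k with
  | zero => simp
  | succ k ih => rw [pow_succ', ← mulVec_mulVec, ih, mulVec_smul, h, smul_smul, pow_succ]

theorem pos_of_mulVec_eq_smul (hM : ∀ i j, 0 ≤ M i j) (hreach : ∀ i j, ∃ k, 0 < (M ^ k) i j)
    {δ : ℝ} {y : ι → ℝ} (hy : 0 ≤ y) (hy0 : y ≠ 0) (h : M *ᵥ y = δ • y) (i : ι) : 0 < y i := by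
  obtain ⟨j, hj⟩ := Function.ne_iff.1 hy0
  obtain ⟨k, hk⟩ := hreach i j
  have hpos : 0 < ((M ^ k) *ᵥ y) i :=
    Finset.sum_pos' (fun l _ => mul_nonneg (pow_apply_nonneg hM k i l) (hy l))
      ⟨j, Finset.mem_univ j, mul_pos hk ((hy j).lt_of_ne' hj)⟩
  rw [pow_mulVec_eq_smul h, Pi.smul_apply, smul_eq_mul] at hpos
  exact (hy i).lt_of_ne fun hi => by simp [← hi] at hpos

theorem mulVec_norm_eq_smul (hM : ∀ i j, 0 ≤ M i j) (hreach : ∀ i j, ∃ k, 0 < (M ^ k) i j)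
    {C δ : ℝ} (hδ : 0 < δ) (hbound : ∀ m i j, (M ^ m) i j ≤ C * δ ^ m) {μ : ℂ} (hμ : ‖μ‖ = δ)
    {y : ι → ℂ} (h : M.map Complex.ofReal *ᵥ y = μ • y) :
    (M *ᵥ fun i => ‖y i‖) = δ • fun i => ‖y i‖ :=
  mulVec_eq_smul_of_smul_le_mulVec hM hreach hδ hbound (fun _ => norm_nonneg _)
    (hμ ▸ norm_smul_le_mulVec_norm hM h)

/-- In matrix form: `ζ • M = D⁻¹ * M * D` with `D = diagonal φ`. -/
def HasPhase (M : Matrix ι ι ℝ) (ζ : ℂ) : Prop :=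
  ∃ φ : ι → ℂ, (∀ i, φ i ≠ 0) ∧ ∀ i j, M i j ≠ 0 → φ j = ζ * φ i

theorem hasPhase_div_of_mem_roots_charpoly (hM : ∀ i j, 0 ≤ M i j)
    (hreach : ∀ i j, ∃ k, 0 < (M ^ k) i j) {C δ : ℝ} (hδ : 0 < δ)
    (hbound : ∀ m i j, (M ^ m) i j ≤ C * δ ^ m) {μ : ℂ}
    (hμ : μ ∈ (M.map Complex.ofReal).charpoly.roots) (hμδ : ‖μ‖ = δ) : M.HasPhase (μ / δ) := by
  obtain ⟨y, hy0, hy⟩ := (mem_roots_charpoly_iff _ μ).1 hμ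
  set a : ι → ℝ := fun i => ‖y i‖
  have ha := mulVec_norm_eq_smul hM hreach hδ hbound hμδ hy
  have ha0 : ∀ i, 0 < a i := by
    refine pos_of_mulVec_eq_smul hM hreach (fun i => norm_nonneg _) ?_ ha
    obtain ⟨j, hj⟩ := Function.ne_iff.1 hy0
    exact Function.ne_iff.2 ⟨j, norm_ne_zero_iff.2 hj⟩
  have ha0' : ∀ i, (a i : ℂ) ≠ 0 := fun i => Complex.ofReal_ne_zero.2 (ha0 i).ne'
  refine ⟨fun i => y i / a i, fun i => div_ne_zero (norm_ne_zero_iff.1 (ha0 i).ne') (ha0' i),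
    fun i j hij => ?_⟩
  -- equality in `‖μ y i‖ ≤ ∑ l, M i l ‖y l‖` aligns all `y l` with `M i l ≠ 0` with `μ y i`
  set u : ℂ := μ / δ * (y i / a i)
  have hu : ‖u‖ = 1 := by
    simp [u, hμδ, a, abs_of_pos hδ, hδ.ne', (ha0 i).ne']
  have hrow : ∑ l, (M i l : ℂ) * y l = u * ∑ l, (‖(M i l : ℂ) * y l‖ : ℂ) := by
    have hsum : ∑ l, ‖(M i l : ℂ) * y l‖ = δ * a i := by
      simpa [mulVec, dotProduct, abs_of_nonneg (hM i _)] using congrFun ha i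
    rw [← Complex.ofReal_sum, hsum]
    calc ∑ l, (M i l : ℂ) * y l = μ * y i := congrFun hy i
      _ = u * ((δ * a i : ℝ) : ℂ) := by
        simp only [u]; push_cast; field_simp [ha0' i, Complex.ofReal_ne_zero.2 hδ.ne']
  have hj := Complex.eq_mul_norm_of_sum_eq_mul_sum_norm hu hrow j (Finset.mem_univ j)
  rw [norm_mul, Complex.norm_real, Real.norm_of_nonneg (hM i j)] at hj
  have hyj : y j = u * a j := mul_left_cancel₀ (Complex.ofReal_ne_zero.2 hij) (by
    rw [hj]; push_cast; ring)
  show y j / a j = u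
  rw [hyj, mul_div_cancel_right₀ _ (ha0' j)]

theorem HasPhase.pow_eq_one {ζ : ℂ} (hζ : M.HasPhase ζ) {k : ℕ} {v : ι} (h : (M ^ k) v v ≠ 0) :
    ζ ^ k = 1 := by
  obtain ⟨φ, hφ0, hφ⟩ := hζ
  have hwalk : ∀ k i j, (M ^ k) i j ≠ 0 → φ j = ζ ^ k * φ i := by
    intro k
    induction k with
    | zero =>
      intro i j h
      obtain rfl : i = j := by_contra fun hij => h (one_apply_ne hij)
      simp
    | succ k ih =>
      intro i j h
      rw [pow_succ', mul_apply] at h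
      obtain ⟨c, -, hc⟩ := Finset.exists_ne_zero_of_sum_ne_zero h
      rw [ih c j (right_ne_zero_of_mul hc), hφ i c (left_ne_zero_of_mul hc), pow_succ]
      ring
  exact mul_right_cancel₀ (hφ0 v) (by rw [one_mul, ← hwalk k v v h])

theorem hasPhase_of_forall_pow_eq_one (hM : ∀ i j, 0 ≤ M i j)
    (hreach : ∀ i j, ∃ k, 0 < (M ^ k) i j) {ζ : ℂ} (hζ : ζ ≠ 0)
    (h : ∀ k v, 0 < (M ^ k) v v → ζ ^ k = 1) : M.HasPhase ζ := by
  rcases isEmpty_or_nonempty ι with hι | ⟨⟨v⟩⟩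
  · exact ⟨fun _ => 1, fun i => isEmptyElim i, fun i => isEmptyElim i⟩
  -- `φ i = ζ ^ (-L i)` with `L i` the length of some walk from `v` to `i`; this is well defined
  -- modulo the cycle lengths, because closing walks by a walk back to `v` gives cycles
  choose L hL using fun i => hreach i v
  choose R hR using fun i => hreach v i
  refine ⟨fun i => (ζ ^ L i)⁻¹, fun i => inv_ne_zero (pow_ne_zero _ hζ), fun i j hij => ?_⟩
  have hMij : 0 < (M ^ 1) i j := by rw [pow_one]; exact (hM i j).lt_of_ne' hij
  have hcyc_i : ζ ^ R i * ζ ^ L i = 1 := by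
    rw [← pow_add]; exact h _ v (pow_add_apply_pos hM (hR i) (hL i))
  have hcyc_j : ζ ^ R i * ζ ^ (1 + L j) = 1 := by
    rw [← pow_add]; exact h _ v (pow_add_apply_pos hM (hR i) (pow_add_apply_pos hM hMij (hL j)))
  have hLij : ζ ^ L i = ζ ^ (1 + L j) :=
    mul_left_cancel₀ (pow_ne_zero _ hζ) (hcyc_i.trans hcyc_j.symm)
  rw [pow_add, pow_one] at hLij
  simp only [hLij, mul_inv, ← mul_assoc, mul_inv_cancel₀ hζ, one_mul]

theorem HasPhase.mul_mem_roots_charpoly {ζ : ℂ} (hζ : M.HasPhase ζ) {δ : ℝ} {u : ι → ℝ}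
    (hu : M *ᵥ u = δ • u) (hu0 : u ≠ 0) :
    (δ : ℂ) * ζ ∈ (M.map Complex.ofReal).charpoly.roots := by
  obtain ⟨φ, hφ0, hφ⟩ := hζ
  refine (mem_roots_charpoly_iff _ _).2 ⟨fun i => φ i * u i, ?_, funext fun i => ?_⟩
  · obtain ⟨i, hi⟩ := Function.ne_iff.1 hu0
    exact Function.ne_iff.2 ⟨i, mul_ne_zero (hφ0 i) (Complex.ofReal_ne_zero.2 hi)⟩
  calc (M.map Complex.ofReal *ᵥ fun i => φ i * u i) i
      = ∑ j, ζ * φ i * ((M i j * u j : ℝ) : ℂ) := Finset.sum_congr rfl fun j _ => by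
        by_cases hij : M i j = 0
        · simp [hij]
        · simp only [map_apply, hφ i j hij]; push_cast; ring
    _ = ζ * φ i * ((M *ᵥ u) i : ℂ) := by rw [← Finset.mul_sum, ← Complex.ofReal_sum]; rfl
    _ = ((δ : ℂ) * ζ) • (fun i => φ i * u i) i := by
        rw [hu, Pi.smul_apply, smul_eq_mul, smul_eq_mul]; push_cast; ring

theorem exists_pow_apply_self_pos_of_ne_zero (hM : ∀ i j, 0 ≤ M i j)
    (hreach : ∀ i j, ∃ k, 0 < (M ^ k) i j) (hM0 : M ≠ 0) : ∃ k ≠ 0, ∃ v, 0 < (M ^ k) v v := by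
  obtain ⟨i, j, hij⟩ : ∃ i j, M i j ≠ 0 := by by_contra! h; exact hM0 (ext h)
  obtain ⟨k, hk⟩ := hreach j i
  have hMij : 0 < (M ^ 1) i j := by rw [pow_one]; exact (hM i j).lt_of_ne' hij
  exact ⟨1 + k, by omega, i, pow_add_apply_pos hM hMij hk⟩

theorem mul_mem_roots_charpoly_and_norm_eq_iff (hM : ∀ i j, 0 ≤ M i j)
    (hreach : ∀ i j, ∃ k, 0 < (M ^ k) i j) {δ : ℝ} (hδ : 0 < δ)
    (hδroot : (δ : ℂ) ∈ (M.map Complex.ofReal).charpoly.roots)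
    (hδmax : ∀ μ ∈ (M.map Complex.ofReal).charpoly.roots, ‖μ‖ ≤ δ) (ζ : ℂ) :
    ((δ : ℂ) * ζ ∈ (M.map Complex.ofReal).charpoly.roots ∧ ‖(δ : ℂ) * ζ‖ = δ) ↔
      ∀ k v, 0 < (M ^ k) v v → ζ ^ k = 1 := by
  obtain ⟨C, hbound⟩ := exists_pow_apply_le_of_trace_pow_le hM hreach hδ.le (trace_pow_le M hδmax)
  obtain ⟨y, hy0, hy⟩ := (mem_roots_charpoly_iff _ _).1 hδroot
  have hu := mulVec_norm_eq_smul hM hreach hδ hbound (by simp [hδ.le]) hy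
  have hu0 : (fun i => ‖y i‖) ≠ 0 := by
    obtain ⟨i, hi⟩ := Function.ne_iff.1 hy0
    exact Function.ne_iff.2 ⟨i, norm_ne_zero_iff.2 hi⟩
  constructor
  · rintro ⟨hroot, hnorm⟩ k v hkv
    have hphase := hasPhase_div_of_mem_roots_charpoly hM hreach hδ hbound hroot hnorm
    rw [mul_div_cancel_left₀ _ (Complex.ofReal_ne_zero.2 hδ.ne')] at hphase
    exact hphase.pow_eq_one hkv.ne'
  · intro h
    have hM0 : M ≠ 0 := by
      rintro rfl
      rw [zero_mulVec, eq_comm, smul_eq_zero] at hu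
      exact hu.elim hδ.ne' hu0
    obtain ⟨k, hk0, v, hkv⟩ := exists_pow_apply_self_pos_of_ne_zero hM hreach hM0
    have hζ : ‖ζ‖ = 1 := Complex.norm_eq_one_of_pow_eq_one (h k v hkv) hk0
    refine ⟨(hasPhase_of_forall_pow_eq_one hM hreach (norm_ne_zero_iff.1 (by simp [hζ])) h)
      |>.mul_mem_roots_charpoly hu hu0, by simp [hζ, hδ.le]⟩

section Fin

variable {n : ℕ} {M : Matrix (Fin n) (Fin n) ℝ}

theorem isReducible_of_closed {C : Finset (Fin n)} (hC : C.Nonempty) (hCu : C ≠ Finset.univ)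
    (hcl : ∀ a ∈ C, ∀ b, M b a ≠ 0 → b ∈ C) : M.IsReducible := by
  have hcard : C.card < n := by simpa using Finset.card_lt_card (Finset.ssubset_univ_iff.2 hCu)
  let e : {x : Fin n // (x : ℕ) < C.card} ≃ {x // x ∈ C} :=
    Fintype.equivOfCardEq (by simp [Fintype.card_subtype, Fin.card_filter_val_lt, hcard.le])
  refine ⟨C.card, Finset.card_pos.2 hC, hcard, e.extendSubtype, fun i j hi hj => ?_⟩
  by_contra h
  exact e.extendSubtype_not_mem i (by omega) (hcl _ (e.extendSubtype_mem j hj) _ h)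

theorem IsIrreducible'.exists_pow_apply_pos (hirr : M.IsIrreducible') (hM : ∀ i j, 0 ≤ M i j)
    (i j : Fin n) : ∃ k, 0 < (M ^ k) i j := by
  classical
  by_contra! h
  let C := Finset.univ.filter fun b => ∃ k, 0 < (M ^ k) b j
  refine hirr (isReducible_of_closed (C := C) ⟨j, by simp [C]; exact ⟨0, by simp⟩⟩
    (fun hC => ?_) fun a ha b hba => ?_)
  · obtain ⟨k, hk⟩ := (Finset.mem_filter.1 (hC ▸ Finset.mem_univ i)).2
    exact (h k).not_gt hk
  · obtain ⟨k, hk⟩ := (Finset.mem_filter.1 ha).2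
    have hMba : 0 < (M ^ 1) b a := by rw [pow_one]; exact (hM b a).lt_of_ne' hba
    exact Finset.mem_filter.2 ⟨Finset.mem_univ b, 1 + k, pow_add_apply_pos hM hMba hk⟩

theorem hasCycle_iff_pow_apply_pos (hM : ∀ i j, 0 ≤ M i j) {v : Fin n} {k : ℕ} :
    M.HasCycle v k ↔ 0 < (M ^ k) v v :=
  hasWalk_iff_pow_apply_pos hM

end Fin

end Matrix

/-- For an irreducible nonnegative matrix `M`, the index of imprimitivity `h(M)`
(the number of eigenvalues of modulus equal to the Perron–Frobenius eigenvalue `δ₀`)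
equals the gcd of the lengths of all directed cycles in the associated graph `D(M)`. -/
theorem imprimitivity_eq_gcd_cycle_lengths {n : ℕ} (M : Matrix (Fin n) (Fin n) ℝ)
    (hM : ∀ i j, 0 ≤ M i j) (hirr : M.IsIrreducible')
    (δ₀ : ℝ) (hδpos : 0 < δ₀) (hδeig : (δ₀ : ℂ) ∈ M.eigs)
    (hδmax : ∀ δ ∈ M.eigs, ‖δ‖ ≤ δ₀)
    (h : ℕ) (hh : h = (M.eigs.toFinset.filter (fun δ => ‖δ‖ = δ₀)).card) :
    IsGCDOf {k | 1 ≤ k ∧ ∃ v : Fin n, M.HasCycle v k} h := by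
  let e : ℂ ≃ ℂ := (Equiv.mulLeft₀ (δ₀ : ℂ) (Complex.ofReal_ne_zero.2 hδpos.ne')).symm
  rw [hh, ← Finset.card_map e.toEmbedding]
  refine isGCDOf_card_of_mem_iff_forall_pow_eq_one fun ζ => ?_
  rw [Finset.mem_map_equiv, Equiv.symm_symm]
  change (δ₀ : ℂ) * ζ ∈ _ ↔ _
  rw [Finset.mem_filter, Multiset.mem_toFinset, Matrix.eigs,
    Matrix.mul_mem_roots_charpoly_and_norm_eq_iff hM (hirr.exists_pow_apply_pos hM) hδpos hδeig
      hδmax]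
  refine ⟨fun hcyc k ⟨_, v, hv⟩ => hcyc k v ((Matrix.hasCycle_iff_pow_apply_pos hM).1 hv),
    fun hcyc k v hkv => ?_⟩
  rcases k.eq_zero_or_pos with rfl | hk
  · exact pow_zero ζ
  · exact hcyc k ⟨hk, v, (Matrix.hasCycle_iff_pow_apply_pos hM).2 hkv⟩
end

section
/- Let γ be a positive root in a simply-laced root system (type A, D, or E). Then the length of the reflection s_γ in the Weyl group satisfies ℓ(s_γ) = 2⟨ρ, γ^∨⟩ − 1, where ρ is the sum of the fundamental weights (half the sum of positive roots) and γ^∨ is the coroot of γ. -/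
open RealInnerProductSpace

/-- The orthogonal reflection in the hyperplane perpendicular to `β`. -/
noncomputable def reflMap {V : Type*} [NormedAddCommGroup V] [InnerProductSpace ℝ V]
    (β : V) : V → V :=
  fun x => x - (2 * ⟪x, β⟫ / ⟪β, β⟫) • β

section RS
variable {V : Type*} [NormedAddCommGroup V] [InnerProductSpace ℝ V]
  {ι : Type*} [Fintype ι]

def Pos (αs : ι → V) (x : V) : Prop := ∃ c : ι → ℕ, x = ∑ p, (c p : ℝ) • αs p

variable {αs : ι → V} {R : Finset V}


lemma reflMap_zero (x : V) : reflMap (0:V) x = x := by simp [reflMap]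

lemma reflMap_inner (β x y : V) : ⟪reflMap β x, reflMap β y⟫ = ⟪x, y⟫ := by
  by_cases hβ : β = 0
  · simp [hβ, reflMap_zero]
  · have hB : ⟪β, β⟫ ≠ (0:ℝ) := inner_self_ne_zero.mpr hβ
    simp only [reflMap, inner_sub_left, inner_sub_right, real_inner_smul_left,
      real_inner_smul_right]
    rw [real_inner_comm y β]
    field_simp
    ring

lemma reflMap_invol (β x : V) : reflMap β (reflMap β x) = x := by
  by_cases hβ : β = 0
  · simp [hβ, reflMap_zero]
  · have hB : ⟪β, β⟫ ≠ (0:ℝ) := inner_self_ne_zero.mpr hβ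
    simp only [reflMap, inner_sub_left, real_inner_smul_left]
    match_scalars
    · ring
    · field_simp; ring

lemma reflMap_map_zero (β : V) : reflMap β 0 = 0 := by simp [reflMap]

lemma reflMap_conj (β δ x : V) :
    reflMap (reflMap β δ) (reflMap β x) = reflMap β (reflMap δ x) := by
  by_cases hβ : β = 0
  · simp [hβ, reflMap_zero]
  · by_cases hδ : δ = 0
    · simp [hδ, reflMap_zero, reflMap_map_zero]
    · have hB : ⟪β, β⟫ ≠ (0:ℝ) := inner_self_ne_zero.mpr hβ
      have hD : ⟪δ, δ⟫ ≠ (0:ℝ) := inner_self_ne_zero.mpr hδ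
      have h1 : ⟪reflMap β x, reflMap β δ⟫ = ⟪x, δ⟫ := reflMap_inner β x δ
      have h2 : ⟪reflMap β δ, reflMap β δ⟫ = ⟪δ, δ⟫ := reflMap_inner β δ δ
      show reflMap β x - (2 * ⟪reflMap β x, reflMap β δ⟫ / ⟪reflMap β δ, reflMap β δ⟫) •
          reflMap β δ = _
      rw [h1, h2]
      simp only [reflMap, inner_sub_left, real_inner_smul_left]
      match_scalars <;> field_simp <;> ring


lemma coords_unique (hindep : LinearIndependent ℝ αs) {c d : ι → ℝ}
    (h : ∑ p, c p • αs p = ∑ p, d p • αs p) : c = d := by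
  have h2 : ∑ p, (c p - d p) • αs p = 0 := by
    simp only [sub_smul, Finset.sum_sub_distrib, h, sub_self]
  funext p
  have := (Fintype.linearIndependent_iff.mp hindep) (fun p => c p - d p) h2 p
  linarith

lemma pos_neg_zero (hindep : LinearIndependent ℝ αs) {x : V}
    (h1 : Pos αs x) (h2 : Pos αs (-x)) : x = 0 := by
  obtain ⟨c, hc⟩ := h1
  obtain ⟨d, hd⟩ := h2
  have h : ∑ p, ((c p : ℝ) + d p) • αs p = ∑ p, (0:ℝ) • αs p := by
    simp only [add_smul, Finset.sum_add_distrib, ← hc, ← hd]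
    simp
  have := congrFun (coords_unique hindep h)
  have hc0 : ∀ p, (c p : ℝ) = 0 := by
    intro p
    have hp := this p
    have : (0:ℝ) ≤ (c p : ℝ) := Nat.cast_nonneg _
    have : (0:ℝ) ≤ (d p : ℝ) := Nat.cast_nonneg _
    linarith
  rw [hc]
  simp only [hc0]
  simp

lemma pos_add {x y : V} (h1 : Pos αs x) (h2 : Pos αs y) : Pos αs (x + y) := by
  obtain ⟨c, hc⟩ := h1
  obtain ⟨d, hd⟩ := h2
  exact ⟨fun p => c p + d p, by simp [hc, hd, add_smul, Finset.sum_add_distrib]⟩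

lemma pos_simple [DecidableEq ι] (i : ι) : Pos αs (αs i) := by
  refine ⟨fun p => if p = i then 1 else 0, ?_⟩
  simp [ite_smul, Finset.sum_ite_eq']




lemma inner_self_pos' {β : V} (hβ : β ≠ 0) : (0:ℝ) < ⟪β, β⟫ :=
  lt_of_le_of_ne real_inner_self_nonneg (Ne.symm (inner_self_ne_zero.mpr hβ))

lemma root_ne_zero (h0 : (0 : V) ∉ R) {β : V} (hβ : β ∈ R) : β ≠ 0 :=
  fun h => h0 (h ▸ hβ)

lemma root_pos_or_neg (hpm : ∀ β ∈ R, (∃ c : ι → ℕ, β = ∑ p, (c p : ℝ) • αs p) ∨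
      (∃ c : ι → ℕ, β = -∑ p, (c p : ℝ) • αs p)) {β : V} (hβ : β ∈ R) :
    Pos αs β ∨ Pos αs (-β) := by
  rcases hpm β hβ with ⟨c, hc⟩ | ⟨c, hc⟩
  · exact Or.inl ⟨c, hc⟩
  · exact Or.inr ⟨c, by rw [hc, neg_neg]⟩

/-- For distinct non-opposite roots in a simply laced system, the pairing is -1, 0 or 1. -/
lemma pairing_cases (h0 : (0 : V) ∉ R)
    (hcrys : ∀ β ∈ R, ∀ δ ∈ R, ∃ z : ℤ, 2 * ⟪δ, β⟫ / ⟪β, β⟫ = (z : ℝ))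
    (hlaced : ∀ β ∈ R, ∀ δ ∈ R, ⟪β, β⟫ = ⟪δ, δ⟫)
    {β δ : V} (hβ : β ∈ R) (hδ : δ ∈ R) (h1 : δ ≠ β) (h2 : δ ≠ -β) :
    2 * ⟪δ, β⟫ / ⟪β, β⟫ = -1 ∨ 2 * ⟪δ, β⟫ / ⟪β, β⟫ = 0 ∨ 2 * ⟪δ, β⟫ / ⟪β, β⟫ = 1 := by
  obtain ⟨z, hz⟩ := hcrys β hβ δ hδ
  have hB : (0:ℝ) < ⟪β, β⟫ := inner_self_pos' (root_ne_zero h0 hβ)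
  have hlen : ⟪β, β⟫ = ⟪δ, δ⟫ := hlaced β hβ δ hδ
  have hdb : ⟪δ, β⟫ = (z : ℝ) * ⟪β, β⟫ / 2 := by
    field_simp at hz ⊢; linarith
  have hcs : ⟪δ, β⟫ * ⟪δ, β⟫ ≤ ⟪δ, δ⟫ * ⟪β, β⟫ := real_inner_mul_inner_self_le δ β
  have hz2 : (z:ℝ)^2 ≤ 4 := by
    rw [hdb] at hcs
    rw [← hlen] at hcs
    nlinarith [mul_pos hB hB, sq_nonneg ((z:ℝ) * ⟪β, β⟫)]
  have hz4 : z^2 ≤ 4 := by exact_mod_cast (by push_cast; linarith : ((z^2 : ℤ):ℝ) ≤ ((4:ℤ):ℝ))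
  have hzne2 : z ≠ 2 := by
    intro h
    subst h
    have : ⟪δ - β, δ - β⟫ = 0 := by
      simp only [inner_sub_left, inner_sub_right]
      rw [real_inner_comm β δ] at *
      push_cast at hdb
      linarith
    exact h1 (by rwa [inner_self_eq_zero, sub_eq_zero] at this)
  have hzne2' : z ≠ -2 := by
    intro h
    subst h
    have : ⟪δ + β, δ + β⟫ = 0 := by
      simp only [inner_add_left, inner_add_right]
      rw [real_inner_comm β δ] at *
      push_cast at hdb
      linarith
    have := (inner_self_eq_zero.mp this)
    exact h2 (by rw [add_eq_zero_iff_eq_neg] at this; exact this)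
  have hb1 : -2 ≤ z := by nlinarith
  have hb2 : z ≤ 2 := by nlinarith
  have hz1 : z = -1 ∨ z = 0 ∨ z = 1 := by omega
  rcases hz1 with h | h | h <;> rw [h] at hz <;> push_cast at hz <;> tauto


lemma reflMap_self {β : V} (hβ : β ≠ 0) : reflMap β β = -β := by
  have hB : ⟪β, β⟫ ≠ (0:ℝ) := inner_self_ne_zero.mpr hβ
  show β - (2 * ⟪β, β⟫ / ⟪β, β⟫) • β = -β
  rw [mul_div_assoc, div_self hB]
  match_scalars
  ring

/-- A simple reflection maps positive roots other than the simple root itself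
to positive roots. -/
lemma refl_simple_pos [DecidableEq ι]
    (hroots : ∀ i, αs i ∈ R) (hindep : LinearIndependent ℝ αs) (h0 : (0 : V) ∉ R)
    (hpm : ∀ β ∈ R, (∃ c : ι → ℕ, β = ∑ p, (c p : ℝ) • αs p) ∨
      (∃ c : ι → ℕ, β = -∑ p, (c p : ℝ) • αs p))
    (hrefl : ∀ β ∈ R, ∀ δ ∈ R, reflMap β δ ∈ R)
    (hred : ∀ β ∈ R, ∀ c : ℝ, c • β ∈ R → c = 1 ∨ c = -1)
    {β : V} (hβR : β ∈ R) (hβ : Pos αs β) (i : ι) (hne : β ≠ αs i) :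
    Pos αs (reflMap (αs i) β) := by
  have hmem : reflMap (αs i) β ∈ R := hrefl (αs i) (hroots i) β hβR
  rcases root_pos_or_neg hpm hmem with h | h
  · exact h
  · -- derive a contradiction
    exfalso
    obtain ⟨c, hc⟩ := hβ
    obtain ⟨d, hd⟩ := h
    set z : ℝ := 2 * ⟪β, αs i⟫ / ⟪αs i, αs i⟫ with hzdef
    have hrfl : reflMap (αs i) β = β - z • αs i := rfl
    -- -(β - z • αs i) = ∑ d p • αs p, so  z • αs i - β = ∑ d
    have key : ∑ p, ((c p : ℝ) + (d p : ℝ)) • αs p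
        = ∑ p, (if p = i then z else 0) • αs p := by
      have h1 : ∑ p, (if p = i then z else 0) • αs p = z • αs i := by
        simp [ite_smul, Finset.sum_ite_eq']
      rw [h1]
      have h2 : -(β - z • αs i) = ∑ p, (d p : ℝ) • αs p := by rw [← hrfl, ← hd]
      simp only [add_smul, Finset.sum_add_distrib, ← hc, ← h2]
      abel
    have hcoords := congrFun (coords_unique hindep key)
    have hcpzero : ∀ p, p ≠ i → (c p : ℝ) = 0 := by
      intro p hp
      have := hcoords p
      simp only [if_neg hp] at this
      have h1 : (0:ℝ) ≤ (c p : ℝ) := Nat.cast_nonneg _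
      have h2 : (0:ℝ) ≤ (d p : ℝ) := Nat.cast_nonneg _
      linarith
    have hβeq : β = (c i : ℝ) • αs i := by
      rw [hc]
      rw [Finset.sum_eq_single i]
      · intro b _ hb; rw [hcpzero b hb]; simp
      · intro h; exact absurd (Finset.mem_univ i) h
    have := hred (αs i) (hroots i) (c i) (by rw [← hβeq]; exact hβR)
    rcases this with h1 | h1
    · exact hne (by rw [hβeq, h1, one_smul])
    · have : (0:ℝ) ≤ (c i : ℝ) := Nat.cast_nonneg _
      linarith


noncomputable def wordMap (αs : ι → V) (l : List ι) : V → V :=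
  (l.map fun i => reflMap (αs i)).foldr (· ∘ ·) id

lemma wordMap_nil : wordMap αs ([] : List ι) = id := rfl

lemma wordMap_cons (i : ι) (l : List ι) :
    wordMap αs (i :: l) = reflMap (αs i) ∘ wordMap αs l := rfl

lemma wordMap_append (l₁ l₂ : List ι) :
    wordMap αs (l₁ ++ l₂) = wordMap αs l₁ ∘ wordMap αs l₂ := by
  induction l₁ with
  | nil => rfl
  | cons i l ih => simp only [List.cons_append, wordMap_cons, ih, Function.comp_assoc]

/-- Sum over the positive roots of the inner product with a simple root. -/
lemma sum_P_inner_simple [DecidableEq ι] [DecidableEq V] [DecidablePred (Pos αs)]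
    (hroots : ∀ i, αs i ∈ R) (hindep : LinearIndependent ℝ αs) (h0 : (0 : V) ∉ R)
    (hpm : ∀ β ∈ R, (∃ c : ι → ℕ, β = ∑ p, (c p : ℝ) • αs p) ∨
      (∃ c : ι → ℕ, β = -∑ p, (c p : ℝ) • αs p))
    (hrefl : ∀ β ∈ R, ∀ δ ∈ R, reflMap β δ ∈ R)
    (hred : ∀ β ∈ R, ∀ c : ℝ, c • β ∈ R → c = 1 ∨ c = -1)
    (i : ι) :
    ∑ β ∈ R.filter (Pos αs), ⟪β, αs i⟫ = ⟪αs i, αs i⟫ := by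
  have hi0 : αs i ≠ 0 := root_ne_zero h0 (hroots i)
  have hiP : αs i ∈ R.filter (Pos αs) :=
    Finset.mem_filter.mpr ⟨hroots i, pos_simple i⟩
  rw [← Finset.add_sum_erase _ _ hiP]
  have hzero : ∑ β ∈ (R.filter (Pos αs)).erase (αs i), ⟪β, αs i⟫ = 0 := by
    apply Finset.sum_involution (fun β _ => reflMap (αs i) β)
    · -- f a + f (g a) = 0
      intro β hβ
      have : ⟪reflMap (αs i) β, αs i⟫ = -⟪β, αs i⟫ := by
        have h1 : ⟪reflMap (αs i) β, αs i⟫ = ⟪reflMap (αs i) β, reflMap (αs i) (reflMap (αs i) (αs i))⟫ := by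
          rw [reflMap_invol]
        rw [h1, reflMap_inner, reflMap_self hi0, inner_neg_right]
      rw [this]; ring
    · -- f a ≠ 0 → g a ≠ a
      intro β hβ hf heq
      have : ⟪reflMap (αs i) β, αs i⟫ = -⟪β, αs i⟫ := by
        have h1 : ⟪reflMap (αs i) β, αs i⟫ = ⟪reflMap (αs i) β, reflMap (αs i) (reflMap (αs i) (αs i))⟫ := by
          rw [reflMap_invol]
        rw [h1, reflMap_inner, reflMap_self hi0, inner_neg_right]
      rw [heq] at this
      exact hf (by linarith)
    · -- g a ∈ s
      intro β hβ
      rw [Finset.mem_erase, Finset.mem_filter] at hβ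
      obtain ⟨hne, hβR, hβpos⟩ := hβ
      have hpos' : Pos αs (reflMap (αs i) β) :=
        refl_simple_pos hroots hindep h0 hpm hrefl hred hβR hβpos i hne
      rw [Finset.mem_erase, Finset.mem_filter]
      refine ⟨?_, hrefl (αs i) (hroots i) β hβR, hpos'⟩
      intro heq
      have : β = reflMap (αs i) (αs i) := by
        conv_lhs => rw [← reflMap_invol (αs i) β]
        rw [heq]
      rw [reflMap_self hi0] at this
      have : β = 0 := pos_neg_zero hindep hβpos (by rw [this, neg_neg]; exact pos_simple i)
      exact root_ne_zero h0 hβR this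
    · -- involution
      intro β hβ
      exact reflMap_invol _ _
  rw [hzero, add_zero]

/-- Counting: the sum of pairings over positive roots equals `1 + #N(s_γ)`. -/
lemma sum_pairing_eq_card [DecidableEq V] [DecidablePred (Pos αs)]
    (hroots : ∀ i, αs i ∈ R) (hindep : LinearIndependent ℝ αs) (h0 : (0 : V) ∉ R)
    (hpm : ∀ β ∈ R, (∃ c : ι → ℕ, β = ∑ p, (c p : ℝ) • αs p) ∨
      (∃ c : ι → ℕ, β = -∑ p, (c p : ℝ) • αs p))
    (hrefl : ∀ β ∈ R, ∀ δ ∈ R, reflMap β δ ∈ R)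
    (hcrys : ∀ β ∈ R, ∀ δ ∈ R, ∃ z : ℤ, 2 * ⟪δ, β⟫ / ⟪β, β⟫ = (z : ℝ))
    (hlaced : ∀ β ∈ R, ∀ δ ∈ R, ⟪β, β⟫ = ⟪δ, δ⟫)
    {γ : V} (hγ : γ ∈ R) (hγpos : Pos αs γ) :
    ∑ β ∈ R.filter (Pos αs), 2 * ⟪β, γ⟫ / ⟪γ, γ⟫
      = 1 + (((R.filter (Pos αs)).filter fun β => ¬ Pos αs (reflMap γ β)).card : ℝ) := by
  have hγ0 : γ ≠ 0 := root_ne_zero h0 hγ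
  have hγγ : (0:ℝ) < ⟪γ, γ⟫ := inner_self_pos' hγ0
  have hflip : ∀ β : V, ⟪reflMap γ β, γ⟫ = -⟪β, γ⟫ := by
    intro β
    have h1 : ⟪reflMap γ β, γ⟫ = ⟪reflMap γ β, reflMap γ (reflMap γ γ)⟫ := by
      rw [reflMap_invol]
    rw [h1, reflMap_inner, reflMap_self hγ0, inner_neg_right]
  rw [← Finset.sum_filter_add_sum_filter_not (R.filter (Pos αs))
    (fun β => Pos αs (reflMap γ β)) (fun β => 2 * ⟪β, γ⟫ / ⟪γ, γ⟫)]
  have hzero : ∑ β ∈ (R.filter (Pos αs)).filter (fun β => Pos αs (reflMap γ β)),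
      2 * ⟪β, γ⟫ / ⟪γ, γ⟫ = 0 := by
    apply Finset.sum_involution (fun β _ => reflMap γ β)
    · intro β hβ
      rw [hflip β]; ring
    · intro β hβ hf heq
      have hb := hflip β
      rw [heq] at hb
      exact hf (by rw [(by linarith : ⟪β, γ⟫ = (0:ℝ))]; ring)
    · intro β hβ
      simp only [Finset.mem_filter] at hβ ⊢
      obtain ⟨⟨hβR, hβpos⟩, hβp⟩ := hβ
      refine ⟨⟨hrefl γ hγ β hβR, hβp⟩, ?_⟩
      rw [reflMap_invol]
      exact hβpos
    · intro β hβ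
      exact reflMap_invol _ _
  rw [hzero, zero_add]
  have hγN : γ ∈ (R.filter (Pos αs)).filter (fun β => ¬ Pos αs (reflMap γ β)) := by
    simp only [Finset.mem_filter]
    refine ⟨⟨hγ, hγpos⟩, ?_⟩
    rw [reflMap_self hγ0]
    intro hneg
    exact hγ0 (pos_neg_zero hindep hγpos hneg)
  rw [← Finset.add_sum_erase _ _ hγN]
  have hfγ : 2 * ⟪γ, γ⟫ / ⟪γ, γ⟫ = 2 := by field_simp
  have hones : ∑ β ∈ (((R.filter (Pos αs)).filter
      fun β => ¬ Pos αs (reflMap γ β)).erase γ), 2 * ⟪β, γ⟫ / ⟪γ, γ⟫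
      = ((((R.filter (Pos αs)).filter fun β => ¬ Pos αs (reflMap γ β)).erase γ).card : ℝ) := by
    rw [Finset.sum_congr rfl (g := fun _ => (1:ℝ)) ?_, Finset.sum_const, nsmul_eq_mul, mul_one]
    intro β hβ
    rw [Finset.mem_erase, Finset.mem_filter, Finset.mem_filter] at hβ
    obtain ⟨hne, ⟨hβR, hβpos⟩, hβn⟩ := hβ
    have hne' : β ≠ -γ := by
      intro h
      apply root_ne_zero h0 hβR
      exact pos_neg_zero hindep hβpos (by rw [h, neg_neg]; exact hγpos)
    rcases pairing_cases h0 hcrys hlaced hγ hβR hne hne' with h | h | h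
    · exfalso
      apply hβn
      have : reflMap γ β = β + γ := by
        show β - (2 * ⟪β, γ⟫ / ⟪γ, γ⟫) • γ = β + γ
        rw [h]
        match_scalars <;> ring
      rw [this]
      exact pos_add hβpos hγpos
    · exfalso
      apply hβn
      have : reflMap γ β = β := by
        show β - (2 * ⟪β, γ⟫ / ⟪γ, γ⟫) • γ = β
        rw [h]
        match_scalars <;> ring
      rw [this]
      exact hβpos
    · exact h
  rw [hfγ, hones, Finset.card_erase_of_mem hγN]
  have h1 : 1 ≤ (((R.filter (Pos αs)).filter fun β => ¬ Pos αs (reflMap γ β)).card) :=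
    Finset.card_pos.mpr ⟨γ, hγN⟩
  push_cast [Nat.cast_sub h1]
  ring

/-- Lower bound: any word's inversion set is at most its length; also closure and
injectivity of word maps. -/
lemma word_bound [DecidableEq ι] [DecidableEq V] [DecidablePred (Pos αs)]
    (hroots : ∀ i, αs i ∈ R) (hindep : LinearIndependent ℝ αs) (h0 : (0 : V) ∉ R)
    (hpm : ∀ β ∈ R, (∃ c : ι → ℕ, β = ∑ p, (c p : ℝ) • αs p) ∨
      (∃ c : ι → ℕ, β = -∑ p, (c p : ℝ) • αs p))
    (hrefl : ∀ β ∈ R, ∀ δ ∈ R, reflMap β δ ∈ R)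
    (hred : ∀ β ∈ R, ∀ c : ℝ, c • β ∈ R → c = 1 ∨ c = -1) :
    ∀ l : List ι, (∀ β ∈ R, wordMap αs l β ∈ R) ∧ Function.Injective (wordMap αs l) ∧
      ((R.filter (Pos αs)).filter fun β => ¬ Pos αs (wordMap αs l β)).card ≤ l.length := by
  intro l
  induction l with
  | nil =>
    refine ⟨fun β hβ => hβ, fun a b h => h, ?_⟩
    rw [Finset.filter_false_of_mem]
    · simp
    · intro β hβ
      rw [Finset.mem_filter] at hβ
      simp only [wordMap_nil, id, not_not]
      exact hβ.2
  | cons i l ih =>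
    obtain ⟨ihR, ihInj, ihCard⟩ := ih
    refine ⟨?_, ?_, ?_⟩
    · intro β hβ
      rw [wordMap_cons]
      exact hrefl (αs i) (hroots i) _ (ihR β hβ)
    · rw [wordMap_cons]
      exact (Function.Involutive.injective (reflMap_invol (αs i))).comp ihInj
    · have hsub : ((R.filter (Pos αs)).filter fun β => ¬ Pos αs (wordMap αs (i :: l) β)) ⊆
          ((R.filter (Pos αs)).filter fun β => ¬ Pos αs (wordMap αs l β)) ∪
          ((R.filter (Pos αs)).filter fun β => wordMap αs l β = αs i) := by
        intro β hβ
        rw [Finset.mem_filter] at hβ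
        obtain ⟨hβP, hnp⟩ := hβ
        rw [Finset.mem_union]
        by_cases heq : wordMap αs l β = αs i
        · exact Or.inr (Finset.mem_filter.mpr ⟨hβP, heq⟩)
        · refine Or.inl (Finset.mem_filter.mpr ⟨hβP, fun hp => hnp ?_⟩)
          rw [wordMap_cons]
          exact refl_simple_pos hroots hindep h0 hpm hrefl hred
            (ihR β (Finset.mem_filter.mp hβP).1) hp i heq
      have hone : ((R.filter (Pos αs)).filter fun β => wordMap αs l β = αs i).card ≤ 1 := by
        rw [Finset.card_le_one]
        intro a ha b hb
        rw [Finset.mem_filter] at ha hb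
        exact ihInj (ha.2.trans hb.2.symm)
      calc ((R.filter (Pos αs)).filter fun β => ¬ Pos αs (wordMap αs (i :: l) β)).card
          ≤ _ := Finset.card_le_card hsub
        _ ≤ _ := Finset.card_union_le _ _
        _ ≤ l.length + 1 := by omega
        _ = (i :: l).length := by simp

/-- Upper bound: a positive root of height `n+1` has a word of length `2n+1`
representing its reflection. -/
lemma word_exists [DecidableEq ι]
    (hroots : ∀ i, αs i ∈ R) (hindep : LinearIndependent ℝ αs) (h0 : (0 : V) ∉ R)
    (hpm : ∀ β ∈ R, (∃ c : ι → ℕ, β = ∑ p, (c p : ℝ) • αs p) ∨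
      (∃ c : ι → ℕ, β = -∑ p, (c p : ℝ) • αs p))
    (hrefl : ∀ β ∈ R, ∀ δ ∈ R, reflMap β δ ∈ R)
    (hcrys : ∀ β ∈ R, ∀ δ ∈ R, ∃ z : ℤ, 2 * ⟪δ, β⟫ / ⟪β, β⟫ = (z : ℝ))
    (hred : ∀ β ∈ R, ∀ c : ℝ, c • β ∈ R → c = 1 ∨ c = -1)
    (hlaced : ∀ β ∈ R, ∀ δ ∈ R, ⟪β, β⟫ = ⟪δ, δ⟫) :
    ∀ n : ℕ, ∀ γ : V, γ ∈ R → ∀ c : ι → ℕ, γ = ∑ p, (c p : ℝ) • αs p →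
      ∑ p, c p = n + 1 →
      ∃ l : List ι, l.length = 2*n + 1 ∧ wordMap αs l = reflMap γ := by
  intro n
  induction n using Nat.strong_induction_on with
  | _ n IH =>
  intro γ hγ c hc hsum
  have hγ0 : γ ≠ 0 := root_ne_zero h0 hγ
  by_cases hn : n = 0
  · subst hn
    -- height 1 : γ is a simple root
    have hex : ∃ i, c i ≠ 0 := by
      by_contra hall
      push_neg at hall
      simp only [hall] at hsum
      simp at hsum
    obtain ⟨i, hi⟩ := hex
    have hsplit : c i + ∑ p ∈ Finset.univ.erase i, c p = 1 := by
      rw [Finset.add_sum_erase _ c (Finset.mem_univ i)]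
      exact hsum
    have hci : c i = 1 := by omega
    have hrest : ∀ j ∈ Finset.univ.erase i, c j = 0 := by
      rw [← Finset.sum_eq_zero_iff]
      omega
    have hγeq : γ = αs i := by
      rw [hc, Finset.sum_eq_single i]
      · rw [hci]; simp
      · intro b _ hb
        rw [hrest b (Finset.mem_erase.mpr ⟨hb, Finset.mem_univ b⟩)]; simp
      · intro h; exact absurd (Finset.mem_univ i) h
    refine ⟨[i], by simp, ?_⟩
    rw [wordMap_cons, wordMap_nil, Function.comp_id, hγeq]
  · obtain ⟨m, rfl⟩ := Nat.exists_eq_succ_of_ne_zero hn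
    have hγpos : Pos αs γ := ⟨c, hc⟩
    have hγγ : (0:ℝ) < ⟪γ, γ⟫ := inner_self_pos' hγ0
    -- find a simple root with positive inner product with γ
    have hex : ∃ i, c i ≠ 0 ∧ (0:ℝ) < ⟪αs i, γ⟫ := by
      by_contra hall
      push_neg at hall
      have hexp : ⟪γ, γ⟫ = ∑ p, (c p : ℝ) * ⟪αs p, γ⟫ := by
        have h1 : ⟪∑ p, (c p : ℝ) • αs p, γ⟫ = ∑ p, (c p : ℝ) * ⟪αs p, γ⟫ := by
          rw [sum_inner]
          exact Finset.sum_congr rfl fun p _ => real_inner_smul_left _ _ _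
        rw [← h1, ← hc]
      have hle : ∑ p, (c p : ℝ) * ⟪αs p, γ⟫ ≤ 0 := by
        apply Finset.sum_nonpos
        intro p _
        by_cases hp : c p = 0
        · rw [hp]; simp
        · exact mul_nonpos_of_nonneg_of_nonpos (Nat.cast_nonneg _) (hall p hp)
      linarith
    obtain ⟨i, hci, hIγ⟩ := hex
    have hi0 : αs i ≠ 0 := root_ne_zero h0 (hroots i)
    have hii : (0:ℝ) < ⟪αs i, αs i⟫ := inner_self_pos' hi0
    have hne : γ ≠ αs i := by
      intro h
      have hrep : αs i = ∑ p, ((if p = i then 1 else 0 : ℕ) : ℝ) • αs p := by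
        rw [Finset.sum_eq_single i (fun b _ hb => by simp [hb])
          (fun h => absurd (Finset.mem_univ i) h)]
        simp
      have hceq := coords_unique hindep (by rw [← hc, h]; exact hrep :
        ∑ p, (c p : ℝ) • αs p = ∑ p, (((if p = i then 1 else 0 : ℕ) : ℝ)) • αs p)
      have hval : ∀ p, (c p : ℝ) = ((if p = i then 1 else 0 : ℕ) : ℝ) := fun p => congrFun hceq p
      have hnat : ∀ p, c p = (if p = i then 1 else 0 : ℕ) := fun p => Nat.cast_injective (hval p)
      have : ∑ p, c p = 1 := by
        rw [Finset.sum_congr rfl fun p _ => hnat p]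
        simp
      omega
    have hne' : γ ≠ -αs i := by
      intro h
      apply hγ0
      apply pos_neg_zero hindep hγpos
      rw [h, neg_neg]
      exact pos_simple i
    have hz1 : 2 * ⟪γ, αs i⟫ / ⟪αs i, αs i⟫ = 1 := by
      rcases pairing_cases h0 hcrys hlaced (hroots i) hγ hne hne' with h | h | h
      · exfalso
        have : (0:ℝ) < ⟪γ, αs i⟫ := by rwa [real_inner_comm]
        have : (0:ℝ) < 2 * ⟪γ, αs i⟫ / ⟪αs i, αs i⟫ := by positivity
        linarith
      · exfalso
        have h2 : (0:ℝ) < ⟪γ, αs i⟫ := by rwa [real_inner_comm]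
        have h3 : 2 * ⟪γ, αs i⟫ / ⟪αs i, αs i⟫ ≠ 0 := by positivity
        exact h3 h
      · exact h
    set δ : V := reflMap (αs i) γ with hδdef
    have hδR : δ ∈ R := hrefl (αs i) (hroots i) γ hγ
    have hδeq : δ = γ - αs i := by
      show γ - (2 * ⟪γ, αs i⟫ / ⟪αs i, αs i⟫) • αs i = γ - αs i
      rw [hz1, one_smul]
    have hδpos : Pos αs δ := refl_simple_pos hroots hindep h0 hpm hrefl hred hγ hγpos i hne
    obtain ⟨d, hd⟩ := hδpos
    have hdc : (fun p => (d p : ℝ)) = fun p => (c p : ℝ) - (if p = i then 1 else 0) := by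
      apply coords_unique hindep
      simp only [sub_smul, ite_smul, one_smul, zero_smul, Finset.sum_sub_distrib]
      rw [← hd, ← hc, Finset.sum_ite_eq' Finset.univ i αs]
      simp [hδeq]
    have hdsum : ∑ p, d p = m + 1 := by
      have : ((∑ p, d p : ℕ) : ℝ) = ((m + 1 : ℕ) : ℝ) := by
        push_cast
        calc (∑ p, (d p : ℝ)) = ∑ p, ((c p : ℝ) - (if p = i then 1 else 0)) := by
              rw [funext_iff] at hdc
              exact Finset.sum_congr rfl fun p _ => hdc p
          _ = (∑ p, (c p : ℝ)) - 1 := by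
              rw [Finset.sum_sub_distrib]
              simp
          _ = (m : ℝ) + 1 := by
              have : ((∑ p, c p : ℕ) : ℝ) = ((m + 1 + 1 : ℕ) : ℝ) := by rw [hsum]
              push_cast at this
              rw [this]; ring
      exact_mod_cast this
    obtain ⟨l', hl'len, hl'word⟩ := IH m (by omega) δ hδR d hd hdsum
    refine ⟨i :: (l' ++ [i]), ?_, ?_⟩
    · simp [hl'len]; omega
    · rw [wordMap_cons, wordMap_append, hl'word]
      funext x
      have hconj := reflMap_conj (αs i) γ x
      have h2 := congrArg (reflMap (αs i)) hconj
      rw [reflMap_invol] at h2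
      calc (reflMap (αs i) ∘ reflMap δ ∘ wordMap αs [i]) x
          = reflMap (αs i) (reflMap δ (reflMap (αs i) x)) := by
            simp [wordMap_cons, wordMap_nil]
        _ = reflMap γ x := h2

end RS

/-- In a simply-laced (all roots of equal length) crystallographic root system, the
length of the reflection `s_γ` in a positive root `γ`, i.e. the least number of simple
reflections whose composite is `s_γ`, equals `2⟨ρ, γ^∨⟩ − 1`, where `ρ` is half the sum
of the positive roots and `γ^∨ = 2γ/(γ,γ)` is the coroot of `γ`. -/
theorem reflection_length_simply_laced {V : Type*} [NormedAddCommGroup V]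
    [InnerProductSpace ℝ V] {ι : Type*} [Fintype ι]
    (R : Finset V) (αs : ι → V)
    (hroots : ∀ i, αs i ∈ R)
    (hindep : LinearIndependent ℝ αs)
    (h0 : (0 : V) ∉ R)
    (hpm : ∀ β ∈ R, (∃ c : ι → ℕ, β = ∑ p, (c p : ℝ) • αs p) ∨
                    (∃ c : ι → ℕ, β = -∑ p, (c p : ℝ) • αs p))
    (hrefl : ∀ β ∈ R, ∀ δ ∈ R, reflMap β δ ∈ R)
    (hcrys : ∀ β ∈ R, ∀ δ ∈ R, ∃ z : ℤ, 2 * ⟪δ, β⟫ / ⟪β, β⟫ = (z : ℝ))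
    (hred : ∀ β ∈ R, ∀ c : ℝ, c • β ∈ R → c = 1 ∨ c = -1)
    (hlaced : ∀ β ∈ R, ∀ δ ∈ R, ⟪β, β⟫ = ⟪δ, δ⟫)
    (γ : V) (hγ : γ ∈ R) (hγpos : ∃ c : ι → ℕ, γ = ∑ p, (c p : ℝ) • αs p)
    (ρ : V)
    (hρ : ρ = (1 / 2 : ℝ) • ∑ β ∈ R, Set.indicator
        {x | ∃ c : ι → ℕ, x = ∑ p, (c p : ℝ) • αs p} id β) :
    ∃ L : ℕ,
      IsLeast {k : ℕ | ∃ l : List ι, l.length = k ∧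
        (l.map fun i => reflMap (αs i)).foldr (· ∘ ·) id = reflMap γ} L ∧
      (L : ℝ) = 2 * ⟪ρ, (2 / ⟪γ, γ⟫) • γ⟫ - 1 := by

  classical
  have hγ0 : γ ≠ 0 := root_ne_zero h0 hγ
  have hγγ : (0:ℝ) < ⟪γ, γ⟫ := inner_self_pos' hγ0
  have hγP : Pos αs γ := hγpos
  obtain ⟨c, hc⟩ := hγpos
  set m : ℕ := ∑ p, c p with hmdef
  have hm : 1 ≤ m := by
    by_contra hmlt
    have hm0 : m = 0 := by omega
    have hz : ∀ p ∈ Finset.univ, c p = 0 := Finset.sum_eq_zero_iff.mp hm0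
    apply hγ0
    rw [hc, Finset.sum_eq_zero]
    intro p _
    rw [hz p (Finset.mem_univ p)]
    simp
  -- 2ρ is the sum of the positive roots
  have hsumrw : ∑ β ∈ R, Set.indicator
      {x | ∃ c : ι → ℕ, x = ∑ p, (c p : ℝ) • αs p} id β
      = ∑ β ∈ R.filter (Pos αs), β := by
    rw [Finset.sum_filter]
    apply Finset.sum_congr rfl
    intro β _
    by_cases hβ : Pos αs β
    · rw [if_pos hβ]
      exact Set.indicator_of_mem
        (show β ∈ {x : V | ∃ c : ι → ℕ, x = ∑ p, (c p : ℝ) • αs p} from hβ) id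
    · rw [if_neg hβ]
      exact Set.indicator_of_notMem
        (show β ∉ {x : V | ∃ c : ι → ℕ, x = ∑ p, (c p : ℝ) • αs p} from hβ) id
  have hρinner : ∀ x : V, ⟪ρ, x⟫ = (1/2 : ℝ) * ∑ β ∈ R.filter (Pos αs), ⟪β, x⟫ := by
    intro x
    rw [hρ, hsumrw, real_inner_smul_left, sum_inner]
  -- height computation
  have hheight : ∑ β ∈ R.filter (Pos αs), ⟪β, γ⟫ = (m : ℝ) * ⟪γ, γ⟫ := by
    have step1 : ∀ β : V, ⟪β, γ⟫ = ∑ p, (c p : ℝ) * ⟪β, αs p⟫ := by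
      intro β
      have h1 : ⟪β, ∑ p, (c p : ℝ) • αs p⟫ = ∑ p, (c p : ℝ) * ⟪β, αs p⟫ := by
        rw [inner_sum]
        exact Finset.sum_congr rfl fun p _ => real_inner_smul_right _ _ _
      rw [← h1, ← hc]
    calc ∑ β ∈ R.filter (Pos αs), ⟪β, γ⟫
        = ∑ β ∈ R.filter (Pos αs), ∑ p, (c p : ℝ) * ⟪β, αs p⟫ :=
          Finset.sum_congr rfl fun β _ => step1 β
      _ = ∑ p, ∑ β ∈ R.filter (Pos αs), (c p : ℝ) * ⟪β, αs p⟫ := Finset.sum_comm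
      _ = ∑ p, (c p : ℝ) * ⟪αs p, αs p⟫ := by
          apply Finset.sum_congr rfl
          intro p _
          rw [← Finset.mul_sum,
            sum_P_inner_simple hroots hindep h0 hpm hrefl hred p]
      _ = ∑ p, (c p : ℝ) * ⟪γ, γ⟫ := by
          apply Finset.sum_congr rfl
          intro p _
          rw [hlaced (αs p) (hroots p) γ hγ]
      _ = (m : ℝ) * ⟪γ, γ⟫ := by
          rw [← Finset.sum_mul, hmdef]
          push_cast
          ring
  -- the inversion set
  set N : Finset V := (R.filter (Pos αs)).filter (fun β => ¬ Pos αs (reflMap γ β))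
    with hNdef
  have hNcardR : (N.card : ℝ) = 2 * (m : ℝ) - 1 := by
    have hkey := sum_pairing_eq_card hroots hindep h0 hpm hrefl hcrys hlaced hγ hγP
    have hlhs : ∑ β ∈ R.filter (Pos αs), 2 * ⟪β, γ⟫ / ⟪γ, γ⟫ = 2 * (m : ℝ) := by
      rw [← Finset.sum_div, ← Finset.mul_sum, hheight]
      field_simp
    rw [hlhs] at hkey
    rw [← hNdef] at hkey
    linarith
  have hNcard : N.card = 2 * m - 1 := by
    have h2m : 1 ≤ 2 * m := by omega
    have : ((2 * m - 1 : ℕ) : ℝ) = 2 * (m : ℝ) - 1 := by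
      push_cast [h2m]
      ring
    exact_mod_cast hNcardR.trans this.symm
  refine ⟨N.card, ⟨?_, ?_⟩, ?_⟩
  · -- membership : a word of length N.card
    obtain ⟨l, hlen, hword⟩ := word_exists hroots hindep h0 hpm hrefl hcrys hred hlaced
      (m - 1) γ hγ c hc (by omega)
    exact ⟨l, by rw [hlen, hNcard]; omega, hword⟩
  · -- lower bound
    intro k hk
    obtain ⟨l, hlen, hfold⟩ := hk
    have hw : wordMap αs l = reflMap γ := hfold
    have hb := (word_bound hroots hindep h0 hpm hrefl hred l).2.2
    rw [hw] at hb
    rw [← hNdef] at hb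
    omega
  · -- the numerical formula
    rw [real_inner_smul_right, hρinner, hheight, hNcardR]
    field_simp
end
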